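/- Let μ be a probability measure on ℝ^p absolutely continuous with respect to Lebesgue measure with everywhere positive density, and let S ⊆ ℝ^p have infinite Lebesgue measure with μ(S) = 1. Then for every β ∈ (0,1) there exists a Borel set B ⊆ S with μ(B) = β and finite Lebesgue measure. -/

import Mathlib

/-!
Pushing `μ` restricted to `S` forward along the distance to the origin gives a probability
measure on `ℝ` without atoms, because spheres are Lebesgue-null. Its distribution function
`r ↦ μ (S ∩ closedBall 0 r)` is therefore continuous and, by the intermediate value theorem,
takes the value `β`; closed balls have finite volume.
-/

open MeasureTheory Set Filter ProbabilityTheory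

theorem StieltjesFunction.continuous_of_measure_singleton (f : StieltjesFunction ℝ)
    (h : ∀ a, f.measure {a} = 0) : Continuous f := by
  refine continuous_iff_continuousAt.2 fun a => ?_
  rw [f.mono.continuousAt_iff_leftLim_eq_rightLim, f.rightLim_eq]
  have hjump := f.measure_singleton a
  rw [h a, eq_comm, ENNReal.ofReal_eq_zero, sub_nonpos] at hjump
  exact le_antisymm (f.mono.leftLim_le le_rfl) hjump

lemma ProbabilityTheory.continuous_cdf (ν : Measure ℝ) [IsProbabilityMeasure ν]
    [NullSingletonClass ν] : Continuous (cdf ν) :=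
  (cdf ν).continuous_of_measure_singleton fun a => by rw [measure_cdf, measure_singleton]

lemma ProbabilityTheory.Ioo_subset_range_cdf (ν : Measure ℝ) [IsProbabilityMeasure ν]
    [NullSingletonClass ν] : Ioo 0 1 ⊆ range (cdf ν) := fun _ hβ =>
  mem_range_of_exists_le_of_exists_ge (continuous_cdf ν)
    ((tendsto_cdf_atBot ν).eventually (eventually_le_nhds hβ.1)).exists
    ((tendsto_cdf_atTop ν).eventually (eventually_ge_nhds hβ.2)).exists

lemma exists_measure_closedBall_eq {E : Type*} [NormedAddCommGroup E] [MeasurableSpace E]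
    [OpensMeasurableSpace E] (μ : Measure E) [IsProbabilityMeasure μ] (x : E)
    (hsphere : ∀ r, μ (Metric.sphere x r) = 0) {β : ℝ} (hβ : β ∈ Ioo 0 1) :
    ∃ r, μ (Metric.closedBall x r) = ENNReal.ofReal β := by
  set ν := μ.map (dist · x)
  have hdist : Measurable (dist · x) := (continuous_id.dist continuous_const).measurable
  have : IsProbabilityMeasure ν := Measure.isProbabilityMeasure_map hdist.aemeasurable
  have : NullSingletonClass ν := ⟨fun r => by
    rw [Measure.map_apply hdist (measurableSet_singleton r)]
    exact hsphere r⟩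
  obtain ⟨r, hr⟩ := Ioo_subset_range_cdf ν hβ
  refine ⟨r, ?_⟩
  rw [← hr, ofReal_cdf, Measure.map_apply hdist measurableSet_Iic]
  rfl

lemma nontrivial_of_volume_eq_top {ι : Type*} [Fintype ι] {S : Set (ι → ℝ)}
    (h : volume S = ⊤) : Nontrivial (ι → ℝ) := by
  cases isEmpty_or_nonempty ι
  · rw [Measure.volume_pi_eq_dirac] at h
    exact absurd h (measure_ne_top _ _)
  · infer_instance

theorem beta_mode_exists_general (p : ℕ) (μ : Measure (Fin p → ℝ)) [IsProbabilityMeasure μ]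
    (f : (Fin p → ℝ) → ENNReal)
    (hμ : μ = MeasureTheory.volume.withDensity f)
    (S : Set (Fin p → ℝ)) (hSm : MeasurableSet S)
    (hSvol : MeasureTheory.volume S = ⊤) (hSμ : μ S = 1)
    (β : ℝ) (hβ : β ∈ Set.Ioo (0:ℝ) 1) :
    ∃ B : Set (Fin p → ℝ), MeasurableSet B ∧ B ⊆ S ∧
      μ B = ENNReal.ofReal β ∧ MeasureTheory.volume B < ⊤ := by
  have := nontrivial_of_volume_eq_top hSvol
  have : IsProbabilityMeasure (μ.restrict S) := ⟨by rw [Measure.restrict_apply_univ, hSμ]⟩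
  have hac : μ.restrict S ≪ volume :=
    Measure.restrict_le_self.absolutelyContinuous.trans (hμ ▸ withDensity_absolutelyContinuous _ _)
  obtain ⟨r, hr⟩ := exists_measure_closedBall_eq (μ.restrict S) 0
    (fun r => hac (Measure.addHaar_sphere volume 0 r)) hβ
  refine ⟨S ∩ Metric.closedBall 0 r, hSm.inter measurableSet_closedBall, inter_subset_left, ?_, ?_⟩
  · rwa [Measure.restrict_apply measurableSet_closedBall, inter_comm] at hr
  · exact (measure_mono inter_subset_right).trans_lt measure_closedBall_lt_top

/-- For an absolutely continuous probability measure on `ℝ^p` with everywhere positive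
density, supported on a set `S` of infinite Lebesgue measure, every `β ∈ (0,1)` is
attained by a Borel subset of `S` of finite Lebesgue measure. -/
theorem beta_mode_exists (p : ℕ) (μ : Measure (Fin p → ℝ)) [IsProbabilityMeasure μ]
    (f : (Fin p → ℝ) → ENNReal) (hf : Measurable f) (hfpos : ∀ x, 0 < f x)
    (hμ : μ = MeasureTheory.volume.withDensity f)
    (S : Set (Fin p → ℝ)) (hSm : MeasurableSet S)
    (hSvol : MeasureTheory.volume S = ⊤) (hSμ : μ S = 1)
    (β : ℝ) (hβ : β ∈ Set.Ioo (0:ℝ) 1) :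
    ∃ B : Set (Fin p → ℝ), MeasurableSet B ∧ B ⊆ S ∧
      μ B = ENNReal.ofReal β ∧ MeasureTheory.volume B < ⊤ :=
  beta_mode_exists_general p μ f hμ S hSm hSvol hSμ β hβ
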